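/- On ℤ⁶ = ℤ³ ⊕ ℤ³ define the symmetric bilinear form Q((x,y),(x′,y′)) = B(x,x′) − B(y,y′) and the endomorphism T(x,y) = (Mx, y). Then the vectors v₁ = (1,0,1,0,0,0), v₂ = (0,1,0,0,1,0), v₃ = (1,0,1,1,0,1) are linearly independent over ℤ, the form Q vanishes identically on their span V (i.e. Q(vᵢ,vⱼ) = 0 for all i,j), and V is T-invariant, i.e. T(V) ⊆ V. (Thus V is a metabolizer for the isometric structure (H₂(N) ⊕ H₂(N), f_* ⊕ id, q ⊕ −q), which proves that the diffeomorphism f is bordant to the identity.) -/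

import Mathlib

/-- The intersection form of `N = CP² # (−CP²) # (−CP²)` over `ℤ`:
`B x y = x₁y₁ − x₂y₂ − x₃y₃`. -/
def interFormZ (x y : Fin 3 → ℤ) : ℤ := x 0 * y 0 - x 1 * y 1 - x 2 * y 2

/-- The integer matrix of `f_* = (ρ_{Σ₊} ∘ ρ_{Σ₋})_*` on `H₂(N)`. -/
def M : Matrix (Fin 3) (Fin 3) ℤ := !![9, 4, -8; 4, 1, -4; 8, 4, -7]

/-- The form `Q = q ⊕ −q` on `ℤ³ ⊕ ℤ³`. -/
def Q (u v : (Fin 3 → ℤ) × (Fin 3 → ℤ)) : ℤ := interFormZ u.1 v.1 - interFormZ u.2 v.2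

/-- The endomorphism `T = f_* ⊕ id` of `ℤ³ ⊕ ℤ³`. -/
def T (u : (Fin 3 → ℤ) × (Fin 3 → ℤ)) : (Fin 3 → ℤ) × (Fin 3 → ℤ) := (M.mulVec u.1, u.2)

def v1 : (Fin 3 → ℤ) × (Fin 3 → ℤ) := (![1, 0, 1], ![0, 0, 0])
def v2 : (Fin 3 → ℤ) × (Fin 3 → ℤ) := (![0, 1, 0], ![0, 1, 0])
def v3 : (Fin 3 → ℤ) × (Fin 3 → ℤ) := (![1, 0, 1], ![1, 0, 1])

/-!
`T` fixes `v₁` and `v₃` and sends `v₂` to `4 v₁ + v₂`, so `V` is `T`-invariant. The coordinates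
`(x₁, x₂, y₁)` send `v₁, v₂, v₃` to the rows of a unitriangular matrix, so they are independent.
Isotropy of `V` is a finite computation of its Gram matrix.
-/

theorem T_eq_prodMap : T = ⇑(M.mulVecLin.prodMap (LinearMap.id : (Fin 3 → ℤ) →ₗ[ℤ] _)) := rfl

theorem T_v1 : T v1 = v1 := by decide

theorem T_v2 : T v2 = (4 : ℤ) • v1 + v2 := by decide

theorem T_v3 : T v3 = v3 := by decide

theorem T_mem_span_v {u : (Fin 3 → ℤ) × (Fin 3 → ℤ)}
    (hu : u ∈ Submodule.span ℤ ({v1, v2, v3} : Set ((Fin 3 → ℤ) × (Fin 3 → ℤ)))) :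
    T u ∈ Submodule.span ℤ ({v1, v2, v3} : Set ((Fin 3 → ℤ) × (Fin 3 → ℤ))) := by
  have hv1 : v1 ∈ Submodule.span ℤ ({v1, v2, v3} : Set ((Fin 3 → ℤ) × (Fin 3 → ℤ))) :=
    Submodule.subset_span (by simp)
  rw [T_eq_prodMap]
  refine (Submodule.map_span_le _ _ _).mpr ?_ ⟨u, hu, rfl⟩
  rintro _ (rfl | rfl | rfl) <;> rw [← T_eq_prodMap]
  · rw [T_v1]
    exact hv1
  · rw [T_v2]
    exact add_mem (Submodule.smul_mem _ _ hv1) (Submodule.subset_span (by simp))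
  · rw [T_v3]
    exact Submodule.subset_span (by simp)

def coordsX1X2Y1 : (Fin 3 → ℤ) × (Fin 3 → ℤ) →ₗ[ℤ] Fin 3 → ℤ where
  toFun u := ![u.1 0, u.1 1, u.2 0]
  map_add' u v := by ext i; fin_cases i <;> rfl
  map_smul' c u := by ext i; fin_cases i <;> rfl

theorem linearIndependent_v : LinearIndependent ℤ ![v1, v2, v3] := by
  let A : Matrix (Fin 3) (Fin 3) ℤ := !![1, 0, 0; 0, 1, 0; 1, 0, 1]
  have hrows : coordsX1X2Y1 ∘ ![v1, v2, v3] = fun i => A i := by decide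
  have hdet : A.det ≠ 0 := by decide
  exact .of_comp coordsX1X2Y1 (hrows ▸ Matrix.linearIndependent_rows_of_det_ne_zero hdet)

/-- The span of `v₁, v₂, v₃` is a metabolizer for `(H₂(N) ⊕ H₂(N), f_* ⊕ id, q ⊕ −q)`. -/
theorem stmt4 :
    LinearIndependent ℤ ![v1, v2, v3] ∧
    (∀ i j : Fin 3, Q (![v1, v2, v3] i) (![v1, v2, v3] j) = 0) ∧
    (∀ u ∈ Submodule.span ℤ ({v1, v2, v3} : Set ((Fin 3 → ℤ) × (Fin 3 → ℤ))),
      T u ∈ Submodule.span ℤ ({v1, v2, v3} : Set ((Fin 3 → ℤ) × (Fin 3 → ℤ)))) :=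
  ⟨linearIndependent_v, by decide, fun _ => T_mem_span_v⟩
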